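/- Alexeiewsky's theorem: for every real a > 0, ∫_0^a ln Γ(x) dx = − ln G(a) + (a−1)·ln Γ(a) − a(a−1)/2 + (a/2)·ln(2π). -/

import Mathlib

/-!
Write `wₘ(x) = x/(m+1) - log (1 + x/(m+1)) ≥ 0`, so that the Weierstrass product of `Γ` reads
`log Γ(x+1) + γx = ∑ₘ wₘ(x)`, and the logarithm of the `m`-th factor of `G(a)` is
`(a-1)²/(2(m+1)) - (m+1) wₘ(a-1)`. Integrate the first series termwise over `[0, a]` (its terms
are nonnegative, so it dominates itself) and subtract `(a-1)` times its value at `a`: the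
combination `∫₀ᵃ (log Γ(x+1) + γx) dx + log G(a) - (a-1)(log Γ(a+1) + γa)`, up to elementary
terms, becomes a single series whose partial sums telescope to
`log a + N + H_N/2 + log N! - (N+1) log (N+a)`. By Stirling's formula and `H_N - log N → γ`
this tends to `log a + log (2π)/2 + γ/2 - a`. The theorem follows with
`∫₀ᵃ log Γ = ∫₀ᵃ log Γ(x+1) - ∫₀ᵃ log x`.
-/

open Real

/-- The double gamma function, defined by its Weierstrass product. -/
noncomputable def doubleGamma (x : ℝ) : ℝ :=
  (2 * π) ^ ((x - 1) / 2) *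
    Real.exp (-(x - 1) * x / 2 - Real.eulerMascheroniConstant * (x - 1) ^ 2 / 2) *
    ∏' n : ℕ,
      ((1 + (x - 1) / (n + 1)) ^ (n + 1) *
        Real.exp (-(x - 1) + (x - 1) ^ 2 / (2 * (n + 1))))

open Filter Finset MeasureTheory Set Topology

local notation "γ" => eulerMascheroniConstant

noncomputable def weierstrassTerm (m : ℕ) (x : ℝ) : ℝ :=
  x / (m + 1) - log (1 + x / (m + 1))

lemma weierstrassTerm_nonneg (m : ℕ) {x : ℝ} (hx : 0 ≤ x) : 0 ≤ weierstrassTerm m x := by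
  have := log_le_sub_one_of_pos (by positivity : 0 < 1 + x / (m + 1))
  rw [weierstrassTerm]
  linarith

lemma log_one_add_div_eq_log_add_sub_log {x c : ℝ} (hc : c ≠ 0) (hx : x + c ≠ 0) :
    log (1 + x / c) = log (x + c) - log c := by
  rw [one_add_div hc, add_comm c x, log_div hx hc]

lemma sum_range_weierstrassTerm {x : ℝ} (hx : 0 < x) (N : ℕ) :
    ∑ m ∈ range N, weierstrassTerm m x =
      BohrMollerup.logGammaSeq x N + log x + x * (harmonic N - log N) := by
  induction N with
  | zero => simp [BohrMollerup.logGammaSeq]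
  | succ N ih =>
    have hN : (0 : ℝ) < N + 1 := by positivity
    rw [sum_range_succ, ih, weierstrassTerm,
      log_one_add_div_eq_log_add_sub_log hN.ne' (by positivity)]
    simp only [harmonic_succ, BohrMollerup.logGammaSeq, Nat.factorial_succ, sum_range_succ]
    push_cast
    rw [log_mul hN.ne' (by positivity)]
    field_simp
    ring

lemma hasSum_weierstrassTerm {x : ℝ} (hx : 0 ≤ x) :
    HasSum (fun m ↦ weierstrassTerm m x) (log (Gamma (x + 1)) + γ * x) := by
  rcases hx.eq_or_lt with rfl | hx
  · simp [weierstrassTerm, hasSum_zero]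
  rw [hasSum_iff_tendsto_nat_of_nonneg (fun m ↦ weierstrassTerm_nonneg m hx.le)]
  have hlim : log (Gamma (x + 1)) + γ * x = log (Gamma x) + log x + x * γ := by
    rw [Gamma_add_one hx.ne', log_mul hx.ne' (Gamma_pos_of_pos hx).ne']
    ring
  rw [hlim]
  refine ((BohrMollerup.tendsto_log_gamma hx).add_const _ |>.add
    (tendsto_harmonic_sub_log.const_mul x)).congr fun N ↦ ?_
  rw [sum_range_weierstrassTerm hx]

lemma hasDerivAt_weierstrassTerm (m : ℕ) {x : ℝ} (hx : x + (m + 1) ≠ 0) :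
    HasDerivAt (weierstrassTerm m) (1 / (m + 1) - 1 / (x + (m + 1))) x := by
  have h : HasDerivAt (fun y : ℝ ↦ y / (m + 1)) (1 / (m + 1)) x := by
    simpa using (hasDerivAt_id x).div_const ((m : ℝ) + 1)
  have hx' : 1 + x / (m + 1) ≠ 0 := by
    rw [one_add_div (by positivity)]
    exact div_ne_zero (by rwa [add_comm]) (by positivity)
  refine (h.sub ((h.const_add 1).log hx')).congr_deriv ?_
  rw [add_comm x] at hx ⊢
  field_simp

lemma integral_weierstrassTerm (m : ℕ) {a : ℝ} (ha : 0 ≤ a) :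
    ∫ x in (0 : ℝ)..a, weierstrassTerm m x =
      (a + (m + 1)) * weierstrassTerm m a - a ^ 2 / (2 * (m + 1)) := by
  have hderiv : ∀ x ∈ uIcc 0 a, HasDerivAt
      (fun x ↦ (x + (m + 1)) * weierstrassTerm m x - x ^ 2 / (2 * (m + 1)))
      (weierstrassTerm m x) x := by
    intro x hx
    rw [uIcc_of_le ha] at hx
    have hne : x + (m + 1) ≠ 0 := by have := hx.1; positivity
    refine ((((hasDerivAt_id' x).add_const ((m : ℝ) + 1)).mul
      (hasDerivAt_weierstrassTerm m hne)).sub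
      ((hasDerivAt_pow 2 x).div_const (2 * ((m : ℝ) + 1)))).congr_deriv ?_
    field_simp
    ring
  have hint : IntervalIntegrable (weierstrassTerm m) volume 0 a := by
    refine ContinuousOn.intervalIntegrable fun x hx ↦ ?_
    rw [uIcc_of_le ha] at hx
    have hne : x + (m + 1) ≠ 0 := by have := hx.1; positivity
    exact (hasDerivAt_weierstrassTerm m hne).continuousAt.continuousWithinAt
  rw [intervalIntegral.integral_eq_sub_of_hasDerivAt hderiv hint]
  simp [weierstrassTerm]

lemma continuousOn_log_Gamma_add_one : ContinuousOn (fun x ↦ log (Gamma (x + 1))) (Ioi (-1)) := by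
  intro x hx
  have hx : 0 < x + 1 := by rw [Set.mem_Ioi] at hx; linarith
  have hGamma : ContinuousAt Gamma (x + 1) :=
    (differentiableAt_Gamma fun m h ↦ by linarith [h ▸ hx, m.cast_nonneg (α := ℝ)]).continuousAt
  exact ((hGamma.comp (f := fun y ↦ y + 1) (by fun_prop)).log
    (Gamma_pos_of_pos hx).ne').continuousWithinAt

lemma intervalIntegrable_log_Gamma_add_one {a b : ℝ} (ha : -1 < a) (hb : -1 < b) :
    IntervalIntegrable (fun x ↦ log (Gamma (x + 1))) volume a b :=
  (continuousOn_log_Gamma_add_one.mono (ordConnected_Ioi.uIcc_subset ha hb)).intervalIntegrable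

lemma hasSum_integral_weierstrassTerm {a : ℝ} (ha : 0 ≤ a) :
    HasSum (fun m ↦ ∫ x in (0 : ℝ)..a, weierstrassTerm m x)
      (∫ x in (0 : ℝ)..a, (log (Gamma (x + 1)) + γ * x)) := by
  have hsum : ∀ x ∈ uIoc 0 a, HasSum (fun m ↦ weierstrassTerm m x) (log (Gamma (x + 1)) + γ * x) :=
    fun x hx ↦ hasSum_weierstrassTerm (uIoc_of_le ha ▸ hx).1.le
  have hint : IntervalIntegrable (fun x ↦ log (Gamma (x + 1)) + γ * x) volume 0 a :=
    (intervalIntegrable_log_Gamma_add_one (by norm_num) (by linarith)).add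
      ((continuous_const_mul γ).intervalIntegrable 0 a)
  have hmeas (m : ℕ) : Measurable (weierstrassTerm m) := by unfold weierstrassTerm; fun_prop
  refine intervalIntegral.hasSum_integral_of_dominated_convergence weierstrassTerm
    (fun m ↦ (hmeas m).aestronglyMeasurable) (fun m ↦ ae_of_all _ fun x hx ↦ ?_)
    (ae_of_all _ fun x hx ↦ (hsum x hx).summable) ?_ (ae_of_all _ hsum)
  · rw [uIoc_of_le ha] at hx
    exact (Real.norm_of_nonneg (weierstrassTerm_nonneg m hx.1.le)).le
  · exact hint.congr fun x hx ↦ (hsum x hx).tsum_eq.symm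

lemma abs_log_one_add_sub_self_add_sq_le {u : ℝ} (hu : |u| ≤ 1 / 2) :
    |log (1 + u) - u + u ^ 2 / 2| ≤ 2 * |u| ^ 3 := by
  have h := abs_log_sub_add_sum_range_le (x := -u) (by rw [abs_neg]; linarith) 2
  simp only [sum_range_succ, sum_range_zero, abs_neg, sub_neg_eq_add] at h
  calc |log (1 + u) - u + u ^ 2 / 2|
      = |0 + (-u) ^ (0 + 1) / ((0 : ℕ) + 1) + (-u) ^ (1 + 1) / ((1 : ℕ) + 1) + log (1 + u)| := by
        congr 1; push_cast; ring
    _ ≤ |u| ^ (2 + 1) / (1 - |u|) := h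
    _ ≤ 2 * |u| ^ 3 := by
        rw [div_le_iff₀ (by linarith), show 2 + 1 = 3 from rfl]
        nlinarith [mul_nonneg (pow_nonneg (abs_nonneg u) 3) (by linarith : (0 : ℝ) ≤ 1 - 2 * |u|)]

lemma summable_sq_div_sub_mul_weierstrassTerm (t : ℝ) :
    Summable fun m : ℕ ↦ t ^ 2 / (2 * (m + 1)) - (m + 1) * weierstrassTerm m t := by
  have hbound : Summable fun m : ℕ ↦ 2 * |t| ^ 3 * (1 / ((m : ℝ) + 1) ^ 2) := by
    refine Summable.mul_left _ ?_
    exact_mod_cast (summable_nat_add_iff 1).mpr (summable_one_div_nat_pow.mpr one_lt_two)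
  refine hbound.of_norm_bounded_eventually ?_
  rw [Nat.cofinite_eq_atTop]
  filter_upwards [eventually_ge_atTop ⌈2 * |t|⌉₊] with m hm
  set k : ℝ := m + 1
  have hk : 0 < k := by positivity
  have hu : |t / k| ≤ 1 / 2 := by
    rw [abs_div, abs_of_pos hk, div_le_iff₀ hk]
    have := (Nat.ceil_le.mp hm)
    linarith
  calc ‖t ^ 2 / (2 * k) - k * weierstrassTerm m t‖
      = k * |log (1 + t / k) - t / k + (t / k) ^ 2 / 2| := by
        rw [Real.norm_eq_abs, ← abs_of_pos hk, ← abs_mul, abs_of_pos hk]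
        congr 1
        simp only [weierstrassTerm, k]
        field_simp
        ring
    _ ≤ k * (2 * |t / k| ^ 3) := by gcongr; exact abs_log_one_add_sub_self_add_sq_le hu
    _ = 2 * |t| ^ 3 * (1 / k ^ 2) := by
        rw [abs_div, abs_of_pos hk]
        field_simp

noncomputable def doubleGammaFactor (m : ℕ) (t : ℝ) : ℝ :=
  (1 + t / (m + 1)) ^ (m + 1) * exp (-t + t ^ 2 / (2 * (m + 1)))

lemma log_doubleGammaFactor (m : ℕ) {t : ℝ} (ht : 0 < 1 + t / (m + 1)) :
    log (doubleGammaFactor m t) = t ^ 2 / (2 * (m + 1)) - (m + 1) * weierstrassTerm m t := by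
  rw [doubleGammaFactor, log_mul (by positivity) (exp_pos _).ne', log_pow, log_exp,
    weierstrassTerm]
  push_cast
  field_simp
  ring

lemma log_doubleGamma {a : ℝ} (ha : 0 < a) :
    log (doubleGamma a) = (a - 1) / 2 * log (2 * π) - (a - 1) * a / 2 - γ * (a - 1) ^ 2 / 2 +
      ∑' m : ℕ, ((a - 1) ^ 2 / (2 * (m + 1)) - (m + 1) * weierstrassTerm m (a - 1)) := by
  have hbase : ∀ m : ℕ, 0 < 1 + (a - 1) / (m + 1) := fun m ↦ by
    rw [one_add_div (by positivity)]
    exact div_pos (by linarith [m.cast_nonneg (α := ℝ)]) (by positivity)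
  have hprod : HasProd (fun m ↦ doubleGammaFactor m (a - 1))
      (exp (∑' m : ℕ, ((a - 1) ^ 2 / (2 * (m + 1)) - (m + 1) * weierstrassTerm m (a - 1)))) := by
    refine Real.hasProd_of_hasSum_log (fun m ↦ mul_pos (pow_pos (hbase m) _) (exp_pos _)) ?_
    simpa only [log_doubleGammaFactor _ (hbase _)] using
      (summable_sq_div_sub_mul_weierstrassTerm (a - 1)).hasSum
  have hG : doubleGamma a = (2 * π) ^ ((a - 1) / 2) *
      exp (-(a - 1) * a / 2 - γ * (a - 1) ^ 2 / 2) * ∏' m, doubleGammaFactor m (a - 1) := rfl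
  rw [hG, hprod.tprod_eq, rpow_def_of_pos (by positivity), ← exp_add, ← exp_add, log_exp]
  ring

lemma sum_range_integral_weierstrassTerm_add_sub {a : ℝ} (ha : 0 < a) (N : ℕ) :
    ∑ m ∈ range N, ((∫ x in (0 : ℝ)..a, weierstrassTerm m x) +
        ((a - 1) ^ 2 / (2 * (m + 1)) - (m + 1) * weierstrassTerm m (a - 1)) -
        (a - 1) * weierstrassTerm m a) =
      log a + (N + harmonic N / 2 + log N.factorial - (N + 1) * log (N + a)) := by
  -- the `m`-th summand is `1 + 1/(2(m+1)) + log (m+1) + ((m+1) log (m+a) - (m+2) log (m+1+a))`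
  induction N with
  | zero => simp
  | succ N ih =>
    rw [sum_range_succ, ih, integral_weierstrassTerm N ha.le, weierstrassTerm, weierstrassTerm,
      log_one_add_div_eq_log_add_sub_log (by positivity) (by positivity),
      log_one_add_div_eq_log_add_sub_log (by positivity) (by linarith [N.cast_nonneg (α := ℝ)]),
      harmonic_succ, Nat.factorial_succ]
    push_cast
    rw [log_mul (by positivity) (by positivity)]
    field_simp
    ring_nf

lemma tendsto_add_harmonic_add_log_factorial_sub (a : ℝ) :
    Tendsto (fun N : ℕ ↦ N + harmonic N / 2 + log N.factorial - (N + 1) * log (N + a)) atTop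
      (𝓝 (log (2 * π) / 2 + γ / 2 - a)) := by
  have hN : Tendsto (fun N : ℕ ↦ (N : ℝ)) atTop atTop := tendsto_natCast_atTop_atTop
  have hstirling : Tendsto (fun N ↦ log (Stirling.stirlingSeq N)) atTop (𝓝 (log π / 2)) := by
    rw [← log_sqrt pi_pos.le]
    exact Stirling.tendsto_stirlingSeq_sqrt_pi.log (by positivity)
  have hmul : Tendsto (fun N : ℕ ↦ N * log (1 + a / N)) atTop (𝓝 a) :=
    (tendsto_mul_log_one_add_div_atTop a).comp hN
  have hlog : Tendsto (fun N : ℕ ↦ log (1 + a / N)) atTop (𝓝 0) := by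
    simpa using ((tendsto_const_nhds.div_atTop hN).const_add 1).log (by norm_num)
  have hlim := (((hstirling.add_const (log 2 / 2)).add (tendsto_harmonic_sub_log.div_const 2)).sub
    (hmul.add hlog))
  rw [show log (2 * π) / 2 + γ / 2 - a = log π / 2 + log 2 / 2 + γ / 2 - (a + 0) by
    rw [log_mul two_ne_zero pi_ne_zero]; ring]
  refine hlim.congr' ?_
  filter_upwards [hN.eventually_gt_atTop 0, hN.eventually_gt_atTop (-a)] with N hN0 hNa
  rw [Stirling.log_stirlingSeq_formula, log_div hN0.ne' (exp_pos 1).ne', log_exp,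
    log_mul two_ne_zero hN0.ne', one_add_div hN0.ne', log_div (by linarith) hN0.ne']
  ring

lemma integral_log_Gamma_add_one_add_tsum_sub {a : ℝ} (ha : 0 < a) :
    (∫ x in (0 : ℝ)..a, (log (Gamma (x + 1)) + γ * x)) +
        ∑' m : ℕ, ((a - 1) ^ 2 / (2 * (m + 1)) - (m + 1) * weierstrassTerm m (a - 1)) -
        (a - 1) * (log (Gamma (a + 1)) + γ * a) =
      log a + (log (2 * π) / 2 + γ / 2 - a) := by
  have hsum := ((hasSum_integral_weierstrassTerm ha.le).add
    (summable_sq_div_sub_mul_weierstrassTerm (a - 1)).hasSum).sub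
    ((hasSum_weierstrassTerm ha.le).mul_left (a - 1))
  refine tendsto_nhds_unique hsum.tendsto_sum_nat ?_
  simp only [sum_range_integral_weierstrassTerm_add_sub ha]
  exact (tendsto_add_harmonic_add_log_factorial_sub a).const_add (log a)

lemma integral_log_Gamma {a : ℝ} (ha : 0 ≤ a) :
    ∫ x in (0 : ℝ)..a, log (Gamma x) =
      (∫ x in (0 : ℝ)..a, (log (Gamma (x + 1)) + γ * x)) - γ * a ^ 2 / 2 - a * log a + a := by
  have hint : IntervalIntegrable (fun x ↦ log (Gamma (x + 1))) volume 0 a :=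
    intervalIntegrable_log_Gamma_add_one (by norm_num) (by linarith)
  have hshift : ∫ x in (0 : ℝ)..a, log (Gamma x) =
      ∫ x in (0 : ℝ)..a, (log (Gamma (x + 1)) - log x) := by
    refine intervalIntegral.integral_congr_ae (ae_of_all _ fun x hx ↦ ?_)
    rw [uIoc_of_le ha] at hx
    rw [Gamma_add_one hx.1.ne', log_mul hx.1.ne' (Gamma_pos_of_pos hx.1).ne']
    ring
  rw [hshift, intervalIntegral.integral_sub hint intervalIntegral.intervalIntegrable_log',
    intervalIntegral.integral_add hint ((continuous_const_mul γ).intervalIntegrable 0 a),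
    integral_log, intervalIntegral.integral_const_mul, integral_id]
  ring

theorem alexeiewsky_theorem (a : ℝ) (ha : 0 < a) :
    ∫ x in (0 : ℝ)..a, Real.log (Real.Gamma x) =
      -Real.log (doubleGamma a) + (a - 1) * Real.log (Real.Gamma a) -
        a * (a - 1) / 2 + a / 2 * Real.log (2 * π) := by
  have hGamma : log (Gamma (a + 1)) = log (Gamma a) + log a := by
    rw [Gamma_add_one ha.ne', log_mul ha.ne' (Gamma_pos_of_pos ha).ne', add_comm]
  rw [integral_log_Gamma ha.le, log_doubleGamma ha]
  linear_combination integral_log_Gamma_add_one_add_tsum_sub ha + (a - 1) * hGamma
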